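/- arXiv:2008.10079 — 6 statements merged into one kernel-verified Lean document; each statement's English description precedes it below -/
import Mathlib

section
/- Let a : ℕ → ℤ be weakly decreasing, and suppose firing moves are legal at two distinct indices k₁ and k₂ (i.e., a(kᵢ) - a(kᵢ+1) ≥ 2 for i = 1,2). Let c₁ be the result of firing at k₁ and c₂ the result of firing at k₂. Then firing at k₂ is legal in c₁, firing at k₁ is legal in c₂, and performing the remaining fire in each case yields the same sequence. (Diamond lemma for unidirectional flow-firing.) -/
/-- The result of a unidirectional firing move at index `k`. -/
def fire (a : ℕ → ℤ) (k : ℕ) : ℕ → ℤ :=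
  fun i => if i = k then a k - 1 else if i = k + 1 then a (k + 1) + 1 else a i

/-! Firing at `k` adds the fixed vector `e_{k+1} - e_k`, so firing moves commute; and it can only
raise the drop `a j - a (j + 1)` at an index `j ≠ k`, so a legal move stays legal after any other. -/

theorem fire_eq_add (a : ℕ → ℤ) (k : ℕ) :
    fire a k = a + (Pi.single (k + 1) 1 - Pi.single k 1) := by
  funext i
  by_cases hk : i = k
  · subst hk
    simp [fire, sub_eq_add_neg]
  · by_cases hk' : i = k + 1
    · subst hk'
      simp [fire]
    · simp [fire, hk, hk']

theorem fire_comm (a : ℕ → ℤ) (k₁ k₂ : ℕ) : fire (fire a k₁) k₂ = fire (fire a k₂) k₁ := by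
  simp only [fire_eq_add, add_right_comm a]

theorem sub_le_fire_sub_fire {a : ℕ → ℤ} {j k : ℕ} (hjk : j ≠ k) :
    a j - a (j + 1) ≤ fire a k j - fire a k (j + 1) := by
  simp only [fire]
  split_ifs <;> subst_vars <;> omega

theorem diamond_lemma_unidirectional_general (a : ℕ → ℤ) (k₁ k₂ : ℕ) (hne : k₁ ≠ k₂)
    (h₁ : a k₁ - a (k₁ + 1) ≥ 2) (h₂ : a k₂ - a (k₂ + 1) ≥ 2) :
    (fire a k₁) k₂ - (fire a k₁) (k₂ + 1) ≥ 2 ∧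
    (fire a k₂) k₁ - (fire a k₂) (k₁ + 1) ≥ 2 ∧
    fire (fire a k₁) k₂ = fire (fire a k₂) k₁ :=
  ⟨h₂.trans (sub_le_fire_sub_fire hne.symm), h₁.trans (sub_le_fire_sub_fire hne),
    fire_comm a k₁ k₂⟩

theorem diamond_lemma_unidirectional (a : ℕ → ℤ) (k₁ k₂ : ℕ) (hne : k₁ ≠ k₂)
    (hdec : ∀ j, a (j + 1) ≤ a j)
    (h₁ : a k₁ - a (k₁ + 1) ≥ 2) (h₂ : a k₂ - a (k₂ + 1) ≥ 2) :
    (fire a k₁) k₂ - (fire a k₁) (k₂ + 1) ≥ 2 ∧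
    (fire a k₂) k₁ - (fire a k₂) (k₁ + 1) ≥ 2 ∧
    fire (fire a k₁) k₂ = fire (fire a k₂) k₁ :=
  diamond_lemma_unidirectional_general a k₁ k₂ hne h₁ h₂
end

section
/- For f ≥ 1 and n ≥ 1, the sequence with a(k) = f for k < n and a(k) = 0 for k ≥ n can be transformed by a finite sequence of legal unidirectional firing moves into a stable sequence (one where a(k) - a(k+1) ≤ 1 for all k). -/
/-- One legal unidirectional firing step. -/
def FireStep (a b : ℕ → ℤ) : Prop :=
  ∃ k, a k - a (k + 1) ≥ 2 ∧ b = fire a k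

lemma fire_sq_update (a : ℕ → ℤ) (k₀ : ℕ) :
    (fun k => (fire a k₀ k)^2) =
      Function.update (Function.update (fun k => (a k)^2) (k₀+1) ((a (k₀+1)+1)^2)) k₀
        ((a k₀ - 1)^2) := by
  funext i
  by_cases h1 : i = k₀ <;> by_cases h2 : i = k₀ + 1 <;>
    simp [fire, Function.update, h1, h2]

lemma sum_fire_sq (a : ℕ → ℤ) (k₀ M : ℕ) (hM : k₀ + 1 < M) :
    ∑ k ∈ Finset.range M, (fire a k₀ k)^2 =
      (∑ k ∈ Finset.range M, (a k)^2) - 2*(a k₀ - a (k₀+1)) + 2 := by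
  have hmem0 : k₀ ∈ Finset.range M := Finset.mem_range.2 (by omega)
  have hmem1 : k₀ + 1 ∈ Finset.range M \ {k₀} := by
    simp [Finset.mem_sdiff, Finset.mem_range]; omega
  have e1 : ∑ k ∈ Finset.range M, (a k)^2 =
      (a k₀)^2 + ((a (k₀+1))^2 + ∑ k ∈ (Finset.range M \ {k₀}) \ {k₀+1}, (a k)^2) := by
    rw [Finset.sum_eq_add_sum_sdiff_singleton_of_mem hmem0 (fun k => (a k)^2),
      Finset.sum_eq_add_sum_sdiff_singleton_of_mem hmem1 (fun k => (a k)^2)]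
  have e2 : ∑ k ∈ Finset.range M, (fire a k₀ k)^2 =
      (a k₀ - 1)^2 + ((a (k₀+1)+1)^2 + ∑ k ∈ (Finset.range M \ {k₀}) \ {k₀+1}, (a k)^2) := by
    rw [fire_sq_update]
    rw [Finset.sum_update_of_mem hmem0]
    rw [Finset.sum_update_of_mem hmem1]
  rw [e1, e2]; ring

lemma main_lemma : ∀ (m : ℕ) (a : ℕ → ℤ) (N : ℕ),
    (∀ k, 0 ≤ a k) → (∀ k, N ≤ k → a k = 0) →
    (∑ k ∈ Finset.range N, (a k)^2) ≤ (m : ℤ) →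
    ∃ b, Relation.ReflTransGen FireStep a b ∧ ∀ k, b k - b (k + 1) ≤ 1 := by
  intro m
  induction m using Nat.strong_induction_on with
  | _ m ih =>
    intro a N hpos hzero hsum
    by_cases hstab : ∀ k, a k - a (k + 1) ≤ 1
    · exact ⟨a, Relation.ReflTransGen.refl, hstab⟩
    · push_neg at hstab
      obtain ⟨k₀, hk₀⟩ := hstab
      have hfire : a k₀ - a (k₀ + 1) ≥ 2 := by omega
      have hk₀lt : k₀ < N := by
        by_contra h
        have := hzero k₀ (by omega)
        have := hpos (k₀ + 1)
        omega
      set b := fire a k₀ with hb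
      have hstep : FireStep a b := ⟨k₀, hfire, rfl⟩
      have hbpos : ∀ k, 0 ≤ b k := by
        intro k
        have h1 := hpos k
        have h2 := hpos (k₀ + 1)
        simp only [hb, fire]
        split_ifs with h3 h4
        · omega
        · omega
        · exact h1
      have hbzero : ∀ k, N + 1 ≤ k → b k = 0 := by
        intro k hk
        simp only [hb, fire]
        rw [if_neg (by omega), if_neg (by omega)]
        exact hzero k (by omega)
      have hext : ∑ k ∈ Finset.range (N + 1), (a k)^2 = ∑ k ∈ Finset.range N, (a k)^2 := by
        rw [Finset.sum_range_succ, hzero N le_rfl]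
        ring
      have hbsum : ∑ k ∈ Finset.range (N + 1), (b k)^2
          ≤ (∑ k ∈ Finset.range N, (a k)^2) - 2 := by
        rw [hb, sum_fire_sq a k₀ (N + 1) (by omega), hext]
        omega
      have hbnn : 0 ≤ ∑ k ∈ Finset.range (N + 1), (b k)^2 :=
        Finset.sum_nonneg fun k _ => sq_nonneg _
      have hm2 : 2 ≤ m := by
        by_contra h
        interval_cases m <;> omega
      obtain ⟨c, hc1, hc2⟩ := ih (m - 2) (by omega) b (N + 1) hbpos hbzero
        (by omega)
      exact ⟨c, Relation.ReflTransGen.head hstep hc1, hc2⟩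

theorem const_then_zero_reaches_stable (f : ℤ) (n : ℕ) (hf : 1 ≤ f) (hn : 1 ≤ n) :
    ∃ b : ℕ → ℤ,
      Relation.ReflTransGen FireStep (fun k => if k < n then f else 0) b ∧
      ∀ k, b k - b (k + 1) ≤ 1 := by
  set a : ℕ → ℤ := fun k => if k < n then f else 0 with ha
  have hpos : ∀ k, 0 ≤ a k := by
    intro k; simp only [ha]; split_ifs <;> omega
  have hzero : ∀ k, n ≤ k → a k = 0 := by
    intro k hk; simp only [ha]; rw [if_neg (by omega)]
  have hsum : (∑ k ∈ Finset.range n, (a k)^2)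
      ≤ ((∑ k ∈ Finset.range n, (a k)^2).toNat : ℤ) :=
    Int.self_le_toNat _
  exact main_lemma _ a n hpos hzero hsum
end

section
/- Let a : ℕ → ℤ be the constant-then-zero sequence a(k) = f for k < n and a(k) = 0 for k ≥ n, with f, n ≥ 1. Then every stable sequence reachable from a by legal unidirectional firing moves has the same total sum n·f, first entry at most f, and is weakly decreasing with consecutive differences at most 1. -/
/-- Invariant preserved by firing steps. -/
def FireInv (f : ℤ) (n : ℕ) (a : ℕ → ℤ) : Prop :=
  (∀ k, a (k + 1) ≤ a k) ∧ a 0 ≤ f ∧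
    ∃ N, (∀ k, N ≤ k → a k = 0) ∧ ∑ k ∈ Finset.range N, a k = (n : ℤ) * f

lemma fireInv_preserved (f : ℤ) (n : ℕ) (a b : ℕ → ℤ) (ha : FireInv f n a)
    (hab : FireStep a b) : FireInv f n b := by
  obtain ⟨hmono, h0, N, hN, hsum⟩ := ha
  obtain ⟨k, hk, rfl⟩ := hab
  refine ⟨?_, ?_, max N (k + 2), ?_, ?_⟩
  · intro j
    rcases eq_or_ne j k with rfl | hjk
    · have h1 : j + 1 ≠ j := by omega
      simp only [fire, if_pos rfl, if_neg h1]
      omega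
    · rcases eq_or_ne (j + 1) k with h1 | h1
      · have h2 : j ≠ k + 1 := by omega
        simp only [fire, if_neg hjk, if_pos h1, if_neg h2]
        have := hmono j
        subst h1
        omega
      · rcases eq_or_ne j (k + 1) with rfl | hj1
        · have h2 : k + 1 + 1 ≠ k := by omega
          have h3 : k + 1 + 1 ≠ k + 1 := by omega
          simp only [fire, if_neg hjk, if_neg h2, if_neg h3, if_pos rfl]
          have := hmono (k + 1)
          omega
        · have h2 : j + 1 ≠ k + 1 := by omega
          simp only [fire, if_neg hjk, if_neg h1, if_neg hj1, if_neg h2]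
          exact hmono j
  · simp only [fire]
    rcases eq_or_ne k 0 with rfl | h
    · simp
      omega
    · rw [if_neg (Ne.symm h), if_neg (by omega : (0 : ℕ) ≠ k + 1)]
      exact h0
  · intro j hj
    simp only [fire]
    have h1 : j ≠ k := by omega
    have h2 : j ≠ k + 1 := by omega
    rw [if_neg h1, if_neg h2]
    exact hN j (by omega)
  · set M := max N (k + 2) with hM
    have hb : ∀ j, fire a k j =
        a j + ((if j = k then (-1 : ℤ) else 0) + (if j = k + 1 then (1 : ℤ) else 0)) := by
      intro j
      simp only [fire]
      rcases eq_or_ne j k with rfl | h1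
      · simp [show j ≠ j + 1 by omega]
        ring
      · rcases eq_or_ne j (k + 1) with rfl | h2
        · simp [h1]
        · simp [h1, h2]
    have haM : ∑ j ∈ Finset.range M, a j = (n : ℤ) * f := by
      rw [← hsum]
      have hNM : N ≤ M := le_max_left _ _
      rw [← Finset.sum_range_add_sum_Ico a hNM]
      have : ∑ j ∈ Finset.Ico N M, a j = 0 :=
        Finset.sum_eq_zero fun j hj => hN j (Finset.mem_Ico.mp hj).1
      omega
    calc ∑ j ∈ Finset.range M, fire a k j
        = ∑ j ∈ Finset.range M, (a j + ((if j = k then (-1 : ℤ) else 0)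
            + (if j = k + 1 then (1 : ℤ) else 0))) := Finset.sum_congr rfl fun j _ => hb j
      _ = (n : ℤ) * f := by
          rw [Finset.sum_add_distrib, Finset.sum_add_distrib, haM,
            Finset.sum_ite_eq' (Finset.range M) k (fun _ => (-1 : ℤ)),
            Finset.sum_ite_eq' (Finset.range M) (k + 1) (fun _ => (1 : ℤ))]
          have hk1 : k ∈ Finset.range M := Finset.mem_range.mpr (by omega)
          have hk2 : k + 1 ∈ Finset.range M := Finset.mem_range.mpr (by omega)
          rw [if_pos hk1, if_pos hk2]
          ring

theorem stable_from_const_then_zero (f : ℤ) (n : ℕ) (hf : 1 ≤ f) (hn : 1 ≤ n)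
    (b : ℕ → ℤ)
    (hreach : Relation.ReflTransGen FireStep (fun k => if k < n then f else 0) b)
    (hstable : ∀ k, b k - b (k + 1) ≤ 1) :
    (∑ᶠ k, b k = (n : ℤ) * f) ∧ b 0 ≤ f ∧
      ∀ k, b (k + 1) ≤ b k ∧ b k - b (k + 1) ≤ 1 := by
  have hinit : FireInv f n (fun k => if k < n then f else 0) := by
    refine ⟨?_, ?_, n, ?_, ?_⟩
    · intro k
      by_cases h1 : k + 1 < n
      · simp [h1, show k < n by omega]
      · by_cases h2 : k < n <;> simp [h1, h2] <;> omega
    · simp [show 0 < n by omega]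
    · intro k hk; simp [show ¬ k < n by omega]
    · rw [Finset.sum_congr rfl (fun j hj => if_pos (Finset.mem_range.mp hj))]
      simp [mul_comm]
  have hinv : FireInv f n b := by
    clear hstable
    induction hreach with
    | refl => exact hinit
    | tail _ hstep ih => exact fireInv_preserved f n _ _ ih hstep
  obtain ⟨hmono, h0, N, hN, hsum⟩ := hinv
  refine ⟨?_, h0, fun k => ⟨hmono k, hstable k⟩⟩
  rw [finsum_eq_sum_of_support_subset b (s := Finset.range N), hsum]
  intro x hx
  simp only [Function.mem_support] at hx
  simp only [Finset.coe_range, Set.mem_Iio]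
  by_contra h
  exact hx (hN x (by omega))
end

section
/- If a configuration c on the faces of ℤ² \ {origin} satisfies 0 ≤ c(F) ≤ Aztec(F) for all faces F, and a legal firing move is applied (moving 1 unit of flow from face F to an adjacent face G when c(F) - c(G) ≥ 2), then the resulting configuration c' still satisfies 0 ≤ c'(F) ≤ Aztec(F) for all F. (Invariance of the sub-Aztec region under firing.) -/
/-- L¹ distance of a face of the ℤ² lattice from the origin. -/
def dist1 (F : ℤ × ℤ) : ℤ := |F.1| + |F.2|

/-- The Aztec pyramid flow of force `p` on a non-hole face. -/
def aztec (p : ℤ) (F : ℤ × ℤ) : ℤ := max (p - dist1 F + 1) 0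

theorem sub_aztec_invariant (p : ℤ) (hp : 0 ≤ p) (c : ℤ × ℤ → ℤ)
    (hbound : ∀ F, F ≠ (0, 0) → 0 ≤ c F ∧ c F ≤ aztec p F)
    (F G : ℤ × ℤ) (hF : F ≠ (0, 0)) (hG : G ≠ (0, 0))
    (hadj : |F.1 - G.1| + |F.2 - G.2| = 1)
    (hlegal : c F - c G ≥ 2) :
    ∀ X, X ≠ (0, 0) →
      0 ≤ (fun Y => if Y = F then c F - 1 else if Y = G then c G + 1 else c Y) X ∧
      (fun Y => if Y = F then c F - 1 else if Y = G then c G + 1 else c Y) X ≤ aztec p X := by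
  have hFG : F ≠ G := by
    rintro rfl
    simp at hadj
  have hd : dist1 G ≤ dist1 F + 1 := by
    have h1 : |G.1| - |F.1| ≤ |G.1 - F.1| := abs_sub_abs_le_abs_sub _ _
    have h2 : |G.2| - |F.2| ≤ |G.2 - F.2| := abs_sub_abs_le_abs_sub _ _
    rw [abs_sub_comm] at h1 h2
    have h3 : (0:ℤ) ≤ |F.1 - G.1| := abs_nonneg _
    have h4 : (0:ℤ) ≤ |F.2 - G.2| := abs_nonneg _
    simp only [dist1]
    omega
  have hA : aztec p F - 1 ≤ aztec p G := by
    unfold aztec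
    have h1 : p - dist1 G + 1 ≤ max (p - dist1 G + 1) 0 := le_max_left _ _
    have h2 : (0:ℤ) ≤ max (p - dist1 G + 1) 0 := le_max_right _ _
    have h3 : max (p - dist1 F + 1) 0 ≤ max (p - dist1 G + 1) 0 + 1 :=
      max_le (by linarith) (by linarith)
    linarith
  obtain ⟨hF0, hF1⟩ := hbound F hF
  obtain ⟨hG0, hG1⟩ := hbound G hG
  intro X hX
  by_cases hXF : X = F
  · subst hXF
    dsimp only
    rw [if_pos rfl]
    constructor <;> linarith
  · by_cases hXG : X = G
    · subst hXG
      dsimp only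
      rw [if_neg hXF, if_pos rfl]
      constructor <;> linarith
    · dsimp only
      rw [if_neg hXF, if_neg hXG]
      exact hbound X hX
end

section
/- Unidirectional flow-firing terminates on any nonnegative, weakly decreasing, eventually-zero sequence: there is no infinite sequence of legal firing moves. (E.g., the potential function Σₖ k·a(k) strictly increases with each move but is bounded above given the fixed total sum and the weakly decreasing constraint.) -/
lemma fire_weighted_sum (a : ℕ → ℤ) (k M : ℕ) (h : k + 1 < M) (w : ℕ → ℤ) :
    ∑ i ∈ Finset.range M, w i * fire a k i
      = (∑ i ∈ Finset.range M, w i * a i) - w k + w (k + 1) := by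
  have hpt : ∀ i, w i * fire a k i
      = w i * a i + ((if i = k then -w k else 0) + (if i = k + 1 then w (k + 1) else 0)) := by
    intro i
    unfold fire
    by_cases h1 : i = k
    · subst h1
      rw [if_pos rfl, if_pos rfl, if_neg (by omega)]
      ring
    · by_cases h2 : i = k + 1
      · subst h2
        rw [if_neg h1, if_pos rfl, if_neg h1, if_pos rfl]
        ring
      · rw [if_neg h1, if_neg h2, if_neg h1, if_neg h2]
        ring
  rw [Finset.sum_congr rfl (fun i _ => hpt i), Finset.sum_add_distrib, Finset.sum_add_distrib]
  have hk : k ∈ Finset.range M := Finset.mem_range.mpr (by omega)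
  have hk1 : k + 1 ∈ Finset.range M := Finset.mem_range.mpr h
  rw [Finset.sum_ite_eq' (Finset.range M) k (fun _ => -w k),
    Finset.sum_ite_eq' (Finset.range M) (k + 1) (fun _ => w (k + 1)),
    if_pos hk, if_pos hk1]
  ring

theorem unidirectional_firing_terminates (a : ℕ → ℤ)
    (hnonneg : ∀ k, 0 ≤ a k) (hdec : ∀ k, a (k + 1) ≤ a k)
    (hfin : ∃ N, ∀ n ≥ N, a n = 0) :
    ¬ ∃ g : ℕ → (ℕ → ℤ), g 0 = a ∧ ∀ n, FireStep (g n) (g (n + 1)) := by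
  rintro ⟨g, hg0, hstep⟩
  obtain ⟨N, hN⟩ := hfin
  -- invariants preserved along the trajectory
  have inv : ∀ n, (∀ i, 0 ≤ g n i) ∧ (∀ i, g n (i + 1) ≤ g n i) ∧
      ∀ m, N + n ≤ m → g n m = 0 := by
    intro n
    induction n with
    | zero =>
      refine ⟨by simpa [hg0] using hnonneg, by simpa [hg0] using hdec, fun m hm => ?_⟩
      rw [hg0]; exact hN m (by omega)
    | succ n ih =>
      obtain ⟨hn0, hnd, hnz⟩ := ih
      obtain ⟨k, hk2, hfe⟩ := hstep n
      have hk0 : 2 ≤ g n k := by linarith [hn0 (k + 1)]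
      have hkN : k < N + n := by
        by_contra h
        push_neg at h
        have := hnz k h
        omega
      refine ⟨?_, ?_, ?_⟩
      · intro i
        rw [hfe]
        unfold fire
        split_ifs with h1 h2
        · linarith [hn0 (k + 1)]
        · linarith [hn0 (k + 1)]
        · exact hn0 i
      · intro i
        rw [hfe]
        unfold fire
        by_cases h1 : i + 1 = k
        · subst h1
          rw [if_pos rfl, if_neg (by omega), if_neg (by omega)]
          linarith [hnd i]
        · by_cases h2 : i + 1 = k + 1
          · have hik : i = k := by omega
            subst hik
            rw [if_neg h1, if_pos rfl, if_pos rfl]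
            linarith
          · rw [if_neg h1, if_neg h2]
            by_cases h3 : i = k
            · exfalso; omega
            · by_cases h4 : i = k + 1
              · subst h4
                rw [if_neg h3, if_pos rfl]
                linarith [hnd (k + 1)]
              · rw [if_neg h3, if_neg h4]
                exact hnd i
      · intro m hm
        rw [hfe]
        unfold fire
        rw [if_neg (by omega), if_neg (by omega)]
        exact hnz m (by omega)
  set S : ℤ := ∑ i ∈ Finset.range N, a i with hSdef
  have hS0 : 0 ≤ S := Finset.sum_nonneg fun i _ => hnonneg i
  -- sum invariance
  have hsum : ∀ n M, N + n ≤ M → ∑ i ∈ Finset.range M, g n i = S := by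
    intro n
    induction n with
    | zero =>
      intro M hM
      rw [hg0, hSdef]
      symm
      apply Finset.sum_subset (Finset.range_subset_range.mpr (by omega))
      intro i _ hi
      exact hN i (by simp at hi; omega)
    | succ n ih =>
      intro M hM
      obtain ⟨hn0, hnd, hnz⟩ := inv n
      obtain ⟨k, hk2, hfe⟩ := hstep n
      have hkN : k < N + n := by
        by_contra h
        push_neg at h
        have h0 := hnz k h
        have := hn0 (k + 1)
        omega
      have hk1M : k + 1 < M := by omega
      have := fire_weighted_sum (g n) k M hk1M (fun _ => 1)
      simp only [one_mul] at this
      rw [hfe, this, ih M (by omega)]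
      ring
  -- uniform support bound
  have hsupp : ∀ n j, S.toNat ≤ j → g n j = 0 := by
    intro n j hj
    obtain ⟨hn0, hnd, hnz⟩ := inv n
    by_contra hne
    have h1 : 1 ≤ g n j := by have := hn0 j; omega
    have hanti : Antitone (g n) := antitone_nat_of_succ_le hnd
    have hsumM := hsum n (N + n + j + 1) (by omega)
    have h2 : (j : ℤ) + 1 ≤ ∑ i ∈ Finset.range (j + 1), g n i := by
      calc (j : ℤ) + 1 = ∑ _i ∈ Finset.range (j + 1), (1 : ℤ) := by simp
        _ ≤ ∑ i ∈ Finset.range (j + 1), g n i := by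
            apply Finset.sum_le_sum
            intro i hi
            exact le_trans h1 (hanti (by simp at hi; omega))
    have h3 : ∑ i ∈ Finset.range (j + 1), g n i ≤ ∑ i ∈ Finset.range (N + n + j + 1), g n i :=
      Finset.sum_le_sum_of_subset_of_nonneg (Finset.range_subset_range.mpr (by omega))
        (fun i _ _ => hn0 i)
    rw [hsumM] at h3
    omega
  -- each value is bounded by S
  have hval : ∀ n i, g n i ≤ S := by
    intro n i
    obtain ⟨hn0, _, _⟩ := inv n
    have hsumM := hsum n (N + n + i + 1) (by omega)
    rw [← hsumM]
    exact Finset.single_le_sum (fun j _ => hn0 j) (Finset.mem_range.mpr (by omega))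
  set T : ℕ := S.toNat + 1 with hTdef
  set Φ : ℕ → ℤ := fun n => ∑ i ∈ Finset.range T, (i : ℤ) * g n i with hΦdef
  have hΦstep : ∀ n, Φ (n + 1) = Φ n + 1 := by
    intro n
    obtain ⟨hn0, hnd, hnz⟩ := inv n
    obtain ⟨k, hk2, hfe⟩ := hstep n
    have hkS : k < S.toNat := by
      by_contra h
      push_neg at h
      have := hsupp n k h
      have := hn0 (k + 1)
      omega
    have hk1T : k + 1 < T := by omega
    have := fire_weighted_sum (g n) k T hk1T (fun i => (i : ℤ))
    simp only [hΦdef, hfe]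
    rw [this]
    push_cast
    ring
  have hΦn : ∀ n, Φ n = Φ 0 + n := by
    intro n
    induction n with
    | zero => simp
    | succ n ih => rw [hΦstep n, ih]; push_cast; ring
  have hΦbound : ∀ n, Φ n ≤ (T : ℤ) * ((T : ℤ) * S) := by
    intro n
    obtain ⟨hn0, _, _⟩ := inv n
    calc Φ n ≤ ∑ _i ∈ Finset.range T, (T : ℤ) * S := by
          apply Finset.sum_le_sum
          intro i hi
          have hiT : (i : ℤ) ≤ (T : ℤ) := by
            have := Finset.mem_range.mp hi; exact_mod_cast le_of_lt this
          exact mul_le_mul hiT (hval n i) (hn0 i) (by positivity)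
      _ = (T : ℤ) * ((T : ℤ) * S) := by
          rw [Finset.sum_const, Finset.card_range, nsmul_eq_mul]
  have hΦ0 : 0 ≤ Φ 0 := by
    apply Finset.sum_nonneg
    intro i _
    exact mul_nonneg (by positivity) ((inv 0).1 i)
  set B : ℤ := (T : ℤ) * ((T : ℤ) * S) with hBdef
  have h := hΦbound (B.toNat + 1)
  rw [hΦn] at h
  push_cast at h
  omega
end

section
/- For f ≥ 2 and n ≥ 1, the unique stable sequence reachable from the sequence (f repeated n times, then 0s) under unidirectional flow-firing is weakly decreasing, has at most one index k beyond the initial run of f's where a(k) = a(k+1) > 0, and all other positive consecutive differences equal exactly 1. -/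
open Finset

/-- triangular numbers, as integers -/
def Tz : ℕ → ℤ
  | 0 => 0
  | q+1 => Tz q + (q+1)

lemma Tz_succ (q : ℕ) : Tz (q+1) = Tz q + (q+1) := rfl

lemma Tz_nonneg (q : ℕ) : 0 ≤ Tz q := by
  induction q with
  | zero => simp [Tz]
  | succ q ih => rw [Tz_succ]; have : (0:ℤ) ≤ (q:ℤ) + 1 := by positivity
                 linarith

lemma Tz_mono {a b : ℕ} (h : a ≤ b) : Tz a ≤ Tz b := by
  induction b with
  | zero => have : a = 0 := Nat.le_zero.mp h
            simp [this]
  | succ b ih =>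
    rcases Nat.lt_or_ge a (b+1) with h' | h'
    · have h2 := ih (Nat.lt_succ_iff.mp h')
      rw [Tz_succ]
      have : (0:ℤ) ≤ (b:ℤ) + 1 := by positivity
      linarith
    · have : a = b + 1 := le_antisymm h h'
      simp [this]

lemma gauss (q : ℕ) : ∑ t ∈ range q, ((q:ℤ) - t) = Tz q := by
  induction q with
  | zero => simp [Tz]
  | succ q ih =>
    rw [Finset.sum_range_succ, Tz_succ, ← ih]
    have h1 : ∀ t ∈ range q, (((q+1:ℕ)):ℤ) - t = ((q:ℤ) - t) + 1 := by
      intro t _; push_cast; ring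
    rw [Finset.sum_congr rfl h1, Finset.sum_add_distrib]
    simp
    push_cast
    ring

lemma sum_ext (a : ℕ → ℤ) {M M' : ℕ} (h : M ≤ M') (hz : ∀ i, M ≤ i → a i = 0) :
    ∑ i ∈ range M', a i = ∑ i ∈ range M, a i := by
  refine (Finset.sum_subset (Finset.range_subset_range.2 h) ?_).symm
  intro x _ hx'
  exact hz x (by simpa using hx')

lemma fire_eq (a : ℕ → ℤ) (k i : ℕ) :
    fire a k i = a i + ((if i = k then (-1:ℤ) else 0) + (if i = k+1 then (1:ℤ) else 0)) := by
  simp only [fire]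
  split_ifs with h1 h2 h3
  · exfalso; omega
  · subst h1; ring
  · subst h3; simp
  · ring

lemma fire_sum (a : ℕ → ℤ) (k m : ℕ) :
    ∑ i ∈ range m, fire a k i
      = (∑ i ∈ range m, a i)
        + ((if k ∈ range m then (-1:ℤ) else 0) + (if k+1 ∈ range m then (1:ℤ) else 0)) := by
  simp only [fire_eq]
  rw [Finset.sum_add_distrib, Finset.sum_add_distrib,
    Finset.sum_ite_eq' (range m) k (fun _ => (-1:ℤ)),
    Finset.sum_ite_eq' (range m) (k+1) (fun _ => (1:ℤ))]

/-- the staircase part of the canonical configuration -/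
def stair (h w : ℕ) (t : ℕ) : ℤ :=
  if t + w ≤ h then (h:ℤ) - t else if t ≤ h then (h:ℤ) + 1 - t else 0

/-- the canonical stable configuration: `p` copies of `f` followed by a staircase -/
def cfg (f : ℤ) (p h w : ℕ) (i : ℕ) : ℤ :=
  if i < p then f else stair h w (i - p)

section cfgfacts

variable {f : ℤ} {p h w : ℕ}

lemma stair_nonneg (t : ℕ) : 0 ≤ stair h w t := by
  unfold stair; split_ifs <;> omega

lemma stair_le (hw : w ≤ h) (t : ℕ) : stair h w t ≤ h := by
  unfold stair; split_ifs <;> omega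

lemma stair_zero {t : ℕ} (ht : h + 1 ≤ t) : stair h w t = 0 := by
  unfold stair; split_ifs <;> omega

lemma stair_stable (hw : w ≤ h) (t : ℕ) : stair h w t - stair h w (t+1) ≤ 1 := by
  unfold stair; split_ifs <;> omega

lemma stair_tail (hw : w ≤ h) :
    ∀ d t, t + d = h + 1 →
      ∑ u ∈ range d, stair h w (t + u)
        = if t + w ≤ h then Tz (h - t) + (w:ℤ) else Tz (h + 1 - t) := by
  intro d
  induction d with
  | zero =>
    intro t ht
    have h1 : ¬ (t + w ≤ h) := by omega
    have h2 : h + 1 - t = 0 := by omega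
    simp [h1, h2, Tz]
  | succ d ih =>
    intro t ht
    rw [Finset.sum_range_succ']
    have hrec : ∀ u ∈ range d, stair h w (t + (u + 1)) = stair h w ((t+1) + u) := by
      intro u _; ring_nf
    rw [Finset.sum_congr rfl hrec, ih (t+1) (by omega)]
    by_cases h1 : t + w ≤ h
    · have hst : stair h w (t + 0) = (h:ℤ) - t := by
        simp only [stair, Nat.add_zero]; rw [if_pos h1]
      rw [hst]
      by_cases h2 : t + 1 + w ≤ h
      · rw [if_pos h2, if_pos h1]
        have e1 : h - t = (h - (t+1)) + 1 := by omega
        rw [e1, Tz_succ]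
        have e2 : ((h - (t+1) : ℕ) : ℤ) = (h:ℤ) - t - 1 := by omega
        rw [e2]; ring
      · rw [if_neg h2, if_pos h1]
        have e1 : h + 1 - (t + 1) = h - t := by omega
        have e2 : h - t = w := by omega
        rw [e1, e2]
        have e3 : ((h:ℤ) - t) = (w:ℤ) := by omega
        rw [e3]
    · have h2 : ¬ (t + 1 + w ≤ h) := by omega
      rw [if_neg h2, if_neg h1]
      by_cases h3 : t ≤ h
      · have hst : stair h w (t + 0) = (h:ℤ) + 1 - t := by
          simp only [stair, Nat.add_zero]; rw [if_neg h1, if_pos h3]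
        rw [hst]
        have e1 : h + 1 - t = (h + 1 - (t+1)) + 1 := by omega
        rw [e1, Tz_succ]
        have e2 : ((h + 1 - (t+1) : ℕ) : ℤ) = (h:ℤ) - t := by omega
        rw [e2]; ring
      · omega

lemma stair_sum (hw : w ≤ h) :
    ∑ u ∈ range (h + 1), stair h w u = Tz h + (w:ℤ) := by
  have := stair_tail (h := h) (w := w) hw (h+1) 0 (by omega)
  simpa [hw] using this

lemma stair_tail_le (hw : w ≤ h) (t : ℕ) :
    ∑ u ∈ range (h + 1 - t), stair h w (t + u)
      ≤ Tz ((stair h w t).toNat) + stair h w t := by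
  by_cases ht : t ≤ h + 1
  · rw [stair_tail hw (h + 1 - t) t (by omega)]
    by_cases h1 : t + w ≤ h
    · have hst : stair h w t = (h:ℤ) - t := by unfold stair; rw [if_pos h1]
      have htn : (stair h w t).toNat = h - t := by rw [hst]; omega
      rw [if_pos h1, htn, hst]
      have : (w:ℤ) ≤ (h:ℤ) - t := by omega
      linarith
    · rw [if_neg h1]
      by_cases h3 : t ≤ h
      · have hst : stair h w t = (h:ℤ) + 1 - t := by
          unfold stair; rw [if_neg h1, if_pos h3]
        have htn : (stair h w t).toNat = h + 1 - t := by rw [hst]; omega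
        rw [htn, hst]
        have : (0:ℤ) ≤ (h:ℤ) + 1 - t := by omega
        linarith
      · have ht1 : t = h + 1 := by omega
        have hst : stair h w t = 0 := stair_zero (by omega)
        rw [hst, ht1]
        simp [Tz]
  · have h0 : h + 1 - t = 0 := by omega
    have hst : stair h w t = 0 := stair_zero (by omega)
    rw [h0, hst]
    simp [Tz]

variable (hf : 2 ≤ f) (hw : w ≤ h) (hh : (h:ℤ) + 1 ≤ f) (hph : p ≠ 0 → (h:ℤ) = f - 1)

include hf hh in
lemma cfg_nonneg (i : ℕ) : 0 ≤ cfg f p h w i := by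
  unfold cfg; split_ifs
  · linarith
  · exact stair_nonneg _

include hf hw hh in
lemma cfg_le (i : ℕ) : cfg f p h w i ≤ f := by
  unfold cfg; split_ifs
  · exact le_refl f
  · have : stair h w (i - p) ≤ (h:ℤ) := stair_le hw _
    linarith

lemma cfg_zero {i : ℕ} (hi : p + h + 1 ≤ i) : cfg f p h w i = 0 := by
  unfold cfg
  rw [if_neg (by omega)]
  exact stair_zero (by omega)

include hf hw hh hph in
lemma cfg_stable (k : ℕ) : cfg f p h w k - cfg f p h w (k+1) ≤ 1 := by
  rcases Nat.lt_or_ge (k+1) p with h1 | h1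
  · have e0 : cfg f p h w k = f := by unfold cfg; rw [if_pos (by omega)]
    have e1 : cfg f p h w (k+1) = f := by unfold cfg; rw [if_pos h1]
    rw [e0, e1]; omega
  · have e1 : cfg f p h w (k+1) = stair h w (k+1-p) := by
      unfold cfg; rw [if_neg (by omega)]
    rcases Nat.lt_or_ge k p with h2 | h2
    · have e0 : cfg f p h w k = f := by unfold cfg; rw [if_pos h2]
      have hkp : k + 1 - p = 0 := by omega
      have e2 : stair h w 0 = (h:ℤ) := by
        unfold stair; rw [if_pos (by omega)]; simp
      rw [e0, e1, hkp, e2, hph (by omega)]; omega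
    · have e0 : cfg f p h w k = stair h w (k-p) := by
        unfold cfg; rw [if_neg (by omega)]
      have e : k + 1 - p = (k - p) + 1 := by omega
      rw [e0, e1, e]
      exact stair_stable hw _

include hw in
lemma cfg_sum : ∑ i ∈ range (p + (h + 1)), cfg f p h w i = (p:ℤ) * f + Tz h + w := by
  rw [Finset.range_eq_Ico, ← Finset.sum_Ico_consecutive _ (Nat.zero_le p) (Nat.le_add_right p (h+1))]
  have e1 : ∑ i ∈ Finset.Ico 0 p, cfg f p h w i = (p:ℤ) * f := by
    rw [← Finset.range_eq_Ico]
    have : ∀ i ∈ range p, cfg f p h w i = f := by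
      intro i hi; unfold cfg; rw [if_pos (Finset.mem_range.mp hi)]
    rw [Finset.sum_congr rfl this, Finset.sum_const, Finset.card_range, nsmul_eq_mul]
  have e2 : ∑ i ∈ Finset.Ico p (p + (h+1)), cfg f p h w i = Tz h + (w:ℤ) := by
    rw [Finset.sum_Ico_eq_sum_range]
    have e3 : p + (h+1) - p = h + 1 := by omega
    rw [e3]
    have : ∀ u ∈ range (h+1), cfg f p h w (p + u) = stair h w u := by
      intro u _; unfold cfg; rw [if_neg (by omega)]
      congr 1; omega
    rw [Finset.sum_congr rfl this]
    exact stair_sum hw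
  rw [e1, e2]; ring

include hh in
lemma cfg_plateau {k : ℕ} (h1 : cfg f p h w k = cfg f p h w (k+1))
    (h2 : 0 < cfg f p h w (k+1)) (h3 : cfg f p h w k ≠ f) : k = p + (h - w) := by
  rcases Nat.lt_or_ge k p with hk | hk
  · exfalso; apply h3; unfold cfg; rw [if_pos hk]
  · have e0 : cfg f p h w k = stair h w (k - p) := by
      unfold cfg; rw [if_neg (by omega)]
    have e1 : cfg f p h w (k+1) = stair h w ((k - p) + 1) := by
      unfold cfg; rw [if_neg (by omega)]; congr 1; omega
    rw [e0, e1] at h1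
    rw [e1] at h2
    revert h1 h2
    unfold stair
    split_ifs <;> intro h1 h2 <;> omega

end cfgfacts

lemma fire_val_at (a : ℕ → ℤ) (k : ℕ) : fire a k k = a k - 1 := by simp [fire]

lemma fire_val_succ (a : ℕ → ℤ) (k : ℕ) : fire a k (k+1) = a (k+1) + 1 := by
  simp [fire]

lemma fire_val_other (a : ℕ → ℤ) (k i : ℕ) (h1 : i ≠ k) (h2 : i ≠ k+1) :
    fire a k i = a i := by simp [fire, h1, h2]

/-- the invariant bundle preserved by unidirectional firing -/
structure FInv (f s : ℤ) (c : ℕ → ℤ) (a : ℕ → ℤ) : Prop where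
  mono : ∀ k, a (k+1) ≤ a k
  nonneg : ∀ k, 0 ≤ a k
  le_f : ∀ k, a k ≤ f
  supp_sum : ∃ M, (∀ i, M ≤ i → a i = 0) ∧ ∑ i ∈ range M, a i = s
  dom : ∀ m, ∑ i ∈ range m, c i ≤ ∑ i ∈ range m, a i

lemma FInv_step {f s : ℤ} {c a b : ℕ → ℤ} (hcs : ∀ j, c j - c (j+1) ≤ 1)
    (hI : FInv f s c a) (hstep : FireStep a b) : FInv f s c b := by
  obtain ⟨k, hk, rfl⟩ := hstep
  constructor
  · -- mono
    intro j
    rcases eq_or_ne j k with rfl | hjk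
    · rw [fire_val_at, fire_val_succ]
      have := hI.mono j
      omega
    · rcases eq_or_ne (j+1) k with hjk1 | hjk1
      · subst hjk1
        rw [fire_val_at, fire_val_other a _ j (by omega) (by omega)]
        have := hI.mono j
        omega
      · rcases eq_or_ne j (k+1) with rfl | hjk2
        · rw [fire_val_succ, fire_val_other a _ (k+1+1) (by omega) (by omega)]
          have := hI.mono (k+1)
          omega
        · rw [fire_val_other a _ j hjk hjk2, fire_val_other a _ (j+1) hjk1 (by omega)]
          exact hI.mono j
  · -- nonneg
    intro i
    rcases eq_or_ne i k with rfl | h1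
    · rw [fire_val_at]
      have := hI.nonneg (i+1)
      omega
    · rcases eq_or_ne i (k+1) with rfl | h2
      · rw [fire_val_succ]
        have := hI.nonneg (k+1)
        omega
      · rw [fire_val_other a _ i h1 h2]; exact hI.nonneg i
  · -- le_f
    intro i
    rcases eq_or_ne i k with rfl | h1
    · rw [fire_val_at]
      have := hI.le_f i
      omega
    · rcases eq_or_ne i (k+1) with rfl | h2
      · rw [fire_val_succ]
        have := hI.le_f k
        omega
      · rw [fire_val_other a _ i h1 h2]; exact hI.le_f i
  · -- supp_sum
    obtain ⟨M, hz, hsum⟩ := hI.supp_sum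
    refine ⟨max M (k+2), ?_, ?_⟩
    · intro i hi
      rw [fire_val_other a _ i (by omega) (by omega)]
      exact hz i (by omega)
    · rw [fire_sum]
      rw [if_pos (Finset.mem_range.2 (by omega)), if_pos (Finset.mem_range.2 (by omega))]
      rw [sum_ext a (le_max_left M (k+2)) hz, hsum]
      ring
  · -- dom
    intro m
    rw [fire_sum]
    rcases eq_or_ne m (k+1) with rfl | hm
    · rw [if_pos (Finset.mem_range.2 (by omega)),
        if_neg (by simp [Finset.mem_range])]
      by_contra hcon
      push_neg at hcon
      have d0 := hI.dom k
      have d1 := hI.dom (k+1)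
      have d2 := hI.dom (k+2)
      have s1 : ∑ i ∈ range (k+1), a i = (∑ i ∈ range k, a i) + a k :=
        Finset.sum_range_succ a k
      have s2 : ∑ i ∈ range (k+2), a i = (∑ i ∈ range (k+1), a i) + a (k+1) :=
        Finset.sum_range_succ a (k+1)
      have c1 : ∑ i ∈ range (k+1), c i = (∑ i ∈ range k, c i) + c k :=
        Finset.sum_range_succ c k
      have c2 : ∑ i ∈ range (k+2), c i = (∑ i ∈ range (k+1), c i) + c (k+1) :=
        Finset.sum_range_succ c (k+1)
      have hcs1 := hcs k
      omega
    · have e : (if k ∈ range m then (-1:ℤ) else 0) + (if k+1 ∈ range m then (1:ℤ) else 0) = 0 := by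
        by_cases h1 : k + 1 < m
        · rw [if_pos (Finset.mem_range.2 (by omega)), if_pos (Finset.mem_range.2 h1)]
          ring
        · rw [if_neg (by simp only [Finset.mem_range]; omega),
            if_neg (by simp only [Finset.mem_range]; omega)]
          ring
      rw [e, add_zero]
      exact hI.dom m

/-- ℕ-valued triangular numbers -/
def TN : ℕ → ℕ
  | 0 => 0
  | q+1 => TN q + (q+1)

lemma TN_succ (q : ℕ) : TN (q+1) = TN q + (q+1) := rfl

lemma TN_cast (q : ℕ) : ((TN q : ℕ) : ℤ) = Tz q := by
  induction q with
  | zero => simp [TN, Tz]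
  | succ q ih => rw [TN_succ, Tz_succ]; push_cast; omega

lemma TN_ge (q : ℕ) : q ≤ TN q := by
  induction q with
  | zero => simp [TN]
  | succ q ih => rw [TN_succ]; omega

lemma finv_init {f : ℤ} (n : ℕ) (c : ℕ → ℤ) (N : ℕ) (hf : 2 ≤ f)
    (hcnn : ∀ i, 0 ≤ c i) (hcle : ∀ i, c i ≤ f)
    (hcz : ∀ i, N ≤ i → c i = 0) (hcsum : ∑ i ∈ range N, c i = (n:ℤ) * f) :
    FInv f ((n:ℤ)*f) c (fun k => if k < n then f else 0) := by
  have hconst : ∀ m : ℕ, m ≤ n → ∑ i ∈ range m, (if i < n then f else 0) = (m:ℤ) * f := by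
    intro m hm
    have e : ∀ i ∈ range m, (if i < n then f else 0) = f := by
      intro i hi
      rw [if_pos (by have := Finset.mem_range.mp hi; omega)]
    rw [Finset.sum_congr rfl e, Finset.sum_const, Finset.card_range, nsmul_eq_mul]
  constructor
  · intro k; try dsimp only
    split_ifs <;> omega
  · intro k; try dsimp only
    split_ifs <;> omega
  · intro k; try dsimp only
    split_ifs <;> omega
  · refine ⟨n, ?_, ?_⟩
    · intro i hi; try dsimp only
      rw [if_neg (by omega)]
    · exact hconst n le_rfl
  · intro m
    rcases le_or_gt m n with hm | hm
    · rw [hconst m hm]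
      have h1 : ∑ i ∈ range m, c i ≤ ∑ i ∈ range m, (fun _ => f) i :=
        Finset.sum_le_sum (fun i _ => hcle i)
      rw [Finset.sum_const, Finset.card_range, nsmul_eq_mul] at h1
      exact h1
    · have e : ∑ i ∈ range m, (if i < n then f else 0) = (n:ℤ) * f := by
        rw [sum_ext _ (le_of_lt hm) (fun i hi => by rw [if_neg (by omega)])]
        exact hconst n le_rfl
      rw [e, ← hcsum]
      rcases le_total m N with h1 | h1
      · exact Finset.sum_le_sum_of_subset_of_nonneg (Finset.range_subset_range.2 h1)
          (fun i _ _ => hcnn i)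
      · rw [sum_ext c h1 hcz]

theorem stable_shape_from_const_then_zero (f : ℤ) (n : ℕ) (hf : 2 ≤ f) (hn : 1 ≤ n)
    (b : ℕ → ℤ)
    (hreach : Relation.ReflTransGen FireStep (fun k => if k < n then f else 0) b)
    (hstable : ∀ k, b k - b (k + 1) ≤ 1) :
    (∀ k, b (k + 1) ≤ b k) ∧
    {k : ℕ | b k = b (k + 1) ∧ 0 < b (k + 1) ∧ b k ≠ f}.Subsingleton ∧
    (∀ k, 0 < b k → b k ≠ f → b k ≠ b (k + 1) → b k - b (k + 1) = 1) := by
  classical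
  -- construct the parameters of the canonical configuration
  obtain ⟨p, h, w, hw, hh, hph, hsum⟩ :
      ∃ p h w : ℕ, w ≤ h ∧ (h:ℤ) + 1 ≤ f ∧ (p ≠ 0 → (h:ℤ) = f - 1) ∧
        (p:ℤ)*f + Tz h + (w:ℤ) = (n:ℤ)*f := by
    set F := f.toNat with hFdef
    have hF : (F:ℤ) = f := Int.toNat_of_nonneg (by linarith)
    have hF2 : 2 ≤ F := by omega
    by_cases hca : TN (F-1) ≤ n*F
    · refine ⟨(n*F - TN (F-1))/F, F-1, (n*F - TN (F-1)) % F, ?_, by omega, fun _ => by omega, ?_⟩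
      · have := Nat.mod_lt (n*F - TN (F-1)) (show 0 < F by omega)
        omega
      · have hdm := Nat.div_add_mod (n*F - TN (F-1)) F
        have hnat : F * ((n*F - TN (F-1))/F) + TN (F-1) + (n*F - TN (F-1)) % F = n * F := by
          omega
        have hz : ((F * ((n*F - TN (F-1))/F) + TN (F-1) + (n*F - TN (F-1)) % F : ℕ) : ℤ)
            = ((n * F : ℕ) : ℤ) := by rw [hnat]
        push_cast at hz
        rw [TN_cast] at hz
        rw [← hF]
        push_cast
        linarith
    · push_neg at hca
      have hex : ∃ q, n*F < TN (q+1) := by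
        refine ⟨F-2, ?_⟩
        have e : F-2+1 = F-1 := by omega
        rw [e]; exact hca
      have hfind : n*F < TN (Nat.find hex + 1) := Nat.find_spec hex
      set h := Nat.find hex with hhdef
      have hmin : TN h ≤ n*F := by
        rcases Nat.eq_zero_or_pos h with h0 | h0
        · rw [h0]; simp [TN]
        · have hm := Nat.find_min hex (m := h - 1) (by omega)
          have e : h - 1 + 1 = h := by omega
          rw [e] at hm; omega
      have hle : h ≤ F - 2 := by
        apply Nat.find_le
        have e : F-2+1 = F-1 := by omega
        rw [e]; exact hca
      have hwle : n*F - TN h ≤ h := by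
        have := TN_succ h
        omega
      refine ⟨0, h, n*F - TN h, hwle, by omega, fun hp => absurd rfl hp, ?_⟩
      · have hnat : TN h + (n*F - TN h) = n * F := by omega
        have hz : ((TN h + (n*F - TN h) : ℕ) : ℤ) = ((n * F : ℕ) : ℤ) := by rw [hnat]
        push_cast at hz
        rw [TN_cast] at hz
        rw [← hF]
        push_cast
        linarith
  -- the invariant holds for b
  have hI0 : FInv f ((n:ℤ)*f) (cfg f p h w) (fun k => if k < n then f else 0) := by
    refine finv_init n (cfg f p h w) (p + (h+1)) hf
      (fun i => cfg_nonneg hf hh i) (fun i => cfg_le hf hw hh i)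
      (fun i hi => cfg_zero (by omega)) ?_
    rw [cfg_sum hw]
    linarith [hsum]
  have hIb0 : ∀ b', Relation.ReflTransGen FireStep (fun k => if k < n then f else 0) b' →
      FInv f ((n:ℤ)*f) (cfg f p h w) b' := by
    intro b' hr
    induction hr with
    | refl => exact hI0
    | tail _ hstep ih => exact FInv_step (fun j => cfg_stable hf hw hh hph j) ih hstep
  have hIb : FInv f ((n:ℤ)*f) (cfg f p h w) b := hIb0 b hreach
  -- b coincides with the canonical configuration
  have key : ∀ j, b j = cfg f p h w j := by
    intro j
    induction j using Nat.strong_induction_on with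
    | _ j ih =>
      have hpre : ∑ i ∈ range j, b i = ∑ i ∈ range j, cfg f p h w i :=
        Finset.sum_congr rfl (fun i hi => ih i (Finset.mem_range.mp hi))
      have hge : cfg f p h w j ≤ b j := by
        have hd := hIb.dom (j+1)
        rw [Finset.sum_range_succ, Finset.sum_range_succ, hpre] at hd
        omega
      by_contra hne
      have hlt : cfg f p h w j < b j := lt_of_le_of_ne hge (fun e => hne e.symm)
      have hjp : p ≤ j := by
        by_contra hjp
        have e : cfg f p h w j = f := by unfold cfg; rw [if_pos (by omega)]
        have := hIb.le_f j
        omega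
      obtain ⟨M0, hz, hsumb⟩ := hIb.supp_sum
      set q := (b j).toNat with hqdef
      have hqb : (q:ℤ) = b j := Int.toNat_of_nonneg (le_trans (cfg_nonneg hf hh j) hge)
      set M := max M0 (max (p + (h+1)) (j + q)) with hMdef
      have hM0 : M0 ≤ M := le_max_left _ _
      have hM1 : p + (h+1) ≤ M := le_trans (le_max_left _ _) (le_max_right _ _)
      have hM2 : j + q ≤ M := le_trans (le_max_right _ _) (le_max_right _ _)
      have hjM : j ≤ M := by omega
      have hbM : ∑ i ∈ range M, b i = (n:ℤ)*f := by
        rw [sum_ext b hM0 hz]; exact hsumb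
      have hcM : ∑ i ∈ range M, cfg f p h w i = (n:ℤ)*f := by
        rw [sum_ext _ hM1 (fun i hi => cfg_zero (by omega))]
        rw [cfg_sum hw]
        linarith [hsum]
      have htail : ∑ i ∈ Finset.Ico j M, b i = ∑ i ∈ Finset.Ico j M, cfg f p h w i := by
        rw [Finset.sum_Ico_eq_sub _ hjM, Finset.sum_Ico_eq_sub _ hjM, hbM, hcM, hpre]
      have hdesc : ∀ u : ℕ, b j - u ≤ b (j + u) := by
        intro u
        induction u with
        | zero => simp
        | succ u ihu =>
          have hs := hstable (j + u)
          have e : j + (u+1) = (j+u)+1 := by omega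
          rw [e]
          push_cast
          push_cast at ihu
          linarith
      have hlow : Tz q ≤ ∑ i ∈ Finset.Ico j M, b i := by
        rw [Finset.sum_Ico_eq_sum_range]
        have h1 : ∑ u ∈ range q, ((q:ℤ) - u) ≤ ∑ u ∈ range q, b (j + u) :=
          Finset.sum_le_sum (fun u _ => by have := hdesc u; omega)
        have h2 : ∑ u ∈ range q, b (j+u) ≤ ∑ u ∈ range (M - j), b (j+u) :=
          Finset.sum_le_sum_of_subset_of_nonneg (Finset.range_subset_range.2 (by omega))
            (fun i _ _ => hIb.nonneg _)
        rw [← gauss q]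
        linarith
      have hup : ∑ i ∈ Finset.Ico j M, cfg f p h w i
          ≤ Tz ((cfg f p h w j).toNat) + cfg f p h w j := by
        rw [Finset.sum_Ico_eq_sum_range]
        have e : ∀ u ∈ range (M - j), cfg f p h w (j + u) = stair h w ((j - p) + u) := by
          intro u _
          unfold cfg
          rw [if_neg (by omega)]
          congr 1
          omega
        rw [Finset.sum_congr rfl e]
        have e2 : ∑ u ∈ range (M - j), stair h w ((j-p)+u)
            = ∑ u ∈ range (h + 1 - (j-p)), stair h w ((j-p)+u) := by
          apply sum_ext (fun u => stair h w ((j-p)+u)) (by omega)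
          intro i hi
          exact stair_zero (by omega)
        rw [e2]
        have e3 : cfg f p h w j = stair h w (j-p) := by
          unfold cfg; rw [if_neg (by omega)]
        rw [e3]
        exact stair_tail_le hw (j-p)
      have hqv : ((cfg f p h w j).toNat) + 1 ≤ q := by
        have := cfg_nonneg hf hh (p := p) (w := w) j
        omega
      have hTz := Tz_mono hqv
      rw [Tz_succ] at hTz
      have hcv : (((cfg f p h w j).toNat : ℕ) : ℤ) = cfg f p h w j :=
        Int.toNat_of_nonneg (cfg_nonneg hf hh j)
      linarith
  have hbc : b = cfg f p h w := funext key
  refine ⟨hIb.mono, ?_, ?_⟩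
  · intro x hx y hy
    simp only [Set.mem_setOf_eq, hbc] at hx hy
    have ex := cfg_plateau hh hx.1 hx.2.1 hx.2.2
    have ey := cfg_plateau hh hy.1 hy.2.1 hy.2.2
    rw [ex, ey]
  · intro k hk1 hk2 hk3
    have h1 := hIb.mono k
    have h2 := hstable k
    omega
end
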